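/- arXiv:1607.02209 — 7 statements merged into one kernel-verified Lean document; each statement's English description precedes it below -/
import Mathlib

section
/- (Theorem: semi-invariants of filtered A_r-Dynkin quivers.) Let n ≥ 1 and r ≥ 2, and let Q be an arbitrary orientation of the A_r-Dynkin graph: vertices 1,…,r and, for each α ∈ {1,…,r−1}, an arrow a_α whose endpoint set {t(a_α), h(a_α)} equals {α, α+1}. Let U_n^r act on 𝔟_n^{⊕(r−1)} by (u_1,…,u_r)·(A_1,…,A_{r−1}) = (u_{h(a_α)} A_α u_{t(a_α)}^{−1})_{α}. Then a polynomial function f on 𝔟_n^{⊕(r−1)} is invariant under this action if and only if there is a polynomial g in (r−1)·n variables such that f(A_1,…,A_{r−1}) = g(((A_α)_{ii})_{1≤α≤r−1, 1≤i≤n}) for all tuples of upper triangular matrices; that is, ℂ[F•Rep(Q,β)]^{𝕌_β} = ℂ[𝔱_n^{⊕(r−1)}] for β = (n,…,n) with the complete standard filtration at each vertex. -/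
/-- `M` is an upper triangular complex matrix (an element of `𝔟ₙ`). -/
def IsUT {n : ℕ} (M : Matrix (Fin n) (Fin n) ℂ) : Prop :=
  ∀ i j : Fin n, j < i → M i j = 0

/-- `M` is a unipotent upper triangular complex matrix (an element of `Uₙ`). -/
def IsUnipUT {n : ℕ} (M : Matrix (Fin n) (Fin n) ℂ) : Prop :=
  IsUT M ∧ ∀ i : Fin n, M i i = 1

/-
If every `A_α` has nonzero diagonal, with diagonal part `D_α`, then choosing `u` at the vertices
one after another along the path (`u₀ = 1`, then `u_{α+1} = D_α u_α A_α⁻¹` for a forward arrow and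
`u_{α+1} = D_α⁻¹ u_α A_α` for a backward one) moves every `A_α` to `D_α`; each `u_{α+1}` is
unipotent because `D_α` and `A_α` have the same diagonal. So an invariant `f` satisfies
`f A = f D` on the locus where no entry vanishes, hence everywhere, both sides being polynomial in
the entries: `f` is its defining polynomial with the off-diagonal variables set to zero.
Conversely, conjugating by unipotent upper triangular matrices preserves diagonals.
-/

namespace MvPolynomial

variable {R σ τ : Type*}

theorem eval_bind₁ [CommSemiring R] (f : τ → R) (g : σ → MvPolynomial τ R)
    (φ : MvPolynomial σ R) : eval f (bind₁ g φ) = eval (fun i => eval f (g i)) φ :=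
  eval₂Hom_bind₁ _ _ _ _

theorem funext_of_forall_ne_zero [CommRing R] [IsDomain R] [Infinite R]
    {p q : MvPolynomial σ R} (h : ∀ x : σ → R, (∀ i, x i ≠ 0) → eval x p = eval x q) :
    p = q :=
  funext_set (fun _ => {0}ᶜ) (fun _ => (Set.finite_singleton 0).infinite_compl)
    fun x hx => h x fun i => hx i trivial

end MvPolynomial

namespace Matrix.IsUpperTriangular

variable {R m : Type*} [Fintype m] [LinearOrder m] {A B C : Matrix m m R}

theorem diag_mul [NonUnitalNonAssocSemiring R] (hA : A.IsUpperTriangular)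
    (hB : B.IsUpperTriangular) (i : m) : (A * B) i i = A i i * B i i := by
  rw [mul_apply]
  refine Finset.sum_eq_single i (fun k _ hk => ?_) (by simp)
  rcases hk.lt_or_gt with h | h
  · rw [hA h, zero_mul]
  · rw [hB h, mul_zero]

variable [DecidableEq m]

theorem inv [CommRing R] (hA : A.IsUpperTriangular) : A⁻¹.IsUpperTriangular := by
  by_cases h : IsUnit A.det
  · have := A.invertibleOfIsUnitDet h
    exact blockTriangular_inv_of_blockTriangular hA
  · rw [nonsing_inv_apply_not_isUnit A h]
    exact blockTriangular_zero

variable [Field R]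

theorem isUnit_det (hA : A.IsUpperTriangular) (hd : ∀ i, A i i ≠ 0) : IsUnit A.det := by
  rw [det_of_isUpperTriangular hA]
  exact isUnit_iff_ne_zero.mpr (Finset.prod_ne_zero_iff.mpr fun i _ => hd i)

theorem inv_apply_self (hA : A.IsUpperTriangular) (hd : ∀ i, A i i ≠ 0) (i : m) :
    A⁻¹ i i = (A i i)⁻¹ := by
  have h := congrFun (congrFun (nonsing_inv_mul A (hA.isUnit_det hd)) i) i
  rw [hA.inv.diag_mul hA, one_apply_eq] at h
  exact eq_inv_of_mul_eq_one_left h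

theorem diag_mul_mul_inv (hA : A.IsUpperTriangular) (hB : B.IsUpperTriangular)
    (hC : C.IsUpperTriangular) (hd : ∀ i, C i i ≠ 0) (i : m) :
    (A * B * C⁻¹) i i = A i i * B i i * (C i i)⁻¹ := by
  rw [diag_mul (hA.mul hB) hC.inv, hA.diag_mul hB, hC.inv_apply_self hd]

end Matrix.IsUpperTriangular

open MvPolynomial Matrix

def entries {ι m R : Type*} (A : ι → Matrix m m R) : ι × m × m → R :=
  fun q => A q.1 q.2.1 q.2.2

noncomputable def restrictDiagonal {ι m R : Type*} [CommSemiring R] [DecidableEq m]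
    (P : MvPolynomial (ι × m × m) R) : MvPolynomial (ι × m) R :=
  bind₁ (fun q => if q.2.1 = q.2.2 then X (q.1, q.2.1) else 0) P

theorem eval_restrictDiagonal {ι m R : Type*} [CommSemiring R] [DecidableEq m]
    (P : MvPolynomial (ι × m × m) R) (d : ι × m → R) :
    eval d (restrictDiagonal P) = eval (entries fun α => diagonal fun i => d (α, i)) P := by
  rw [restrictDiagonal, eval_bind₁]
  refine congrArg (eval · P) (funext fun ⟨α, i, j⟩ => ?_)
  by_cases hij : i = j
  · subst hij; simp [entries]
  · simp [entries, hij]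

theorem eval_entries_eq_of_forall_diag_ne_zero {ι m K : Type*} [LinearOrder m] [CommRing K]
    [IsDomain K] [Infinite K] {P Q : MvPolynomial (ι × m × m) K}
    (h : ∀ A : ι → Matrix m m K, (∀ α, (A α).IsUpperTriangular) → (∀ α i, A α i i ≠ 0) →
      eval (entries A) P = eval (entries A) Q)
    {A : ι → Matrix m m K} (hA : ∀ α, (A α).IsUpperTriangular) :
    eval (entries A) P = eval (entries A) Q := by
  let upperPart (v : ι × m × m → K) : ι → Matrix m m K :=
    fun α => of fun i j => if j < i then 0 else v (α, i, j)
  let killBelow (S : MvPolynomial (ι × m × m) K) : MvPolynomial (ι × m × m) K :=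
    bind₁ (fun q => if q.2.2 < q.2.1 then 0 else X q) S
  have eval_killBelow : ∀ v S, eval v (killBelow S) = eval (entries (upperPart v)) S := by
    intro v S
    rw [eval_bind₁]
    refine congrArg (eval · S) (funext fun q => ?_)
    split_ifs <;> simp [entries, upperPart, *]
  have hkill : killBelow P = killBelow Q := funext_of_forall_ne_zero fun v hv => by
    rw [eval_killBelow, eval_killBelow]
    exact h _ (fun α i j hij => if_pos hij) fun α i => by simp [upperPart, hv]
  have hupper : upperPart (entries A) = A := by
    funext α i j
    by_cases hij : j < i
    · simp [upperPart, hij, hA α hij]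
    · simp [upperPart, entries, hij]
  simpa only [eval_killBelow, hupper] using congrArg (eval (entries A)) hkill

theorem isUnipUT_one {n : ℕ} : IsUnipUT (1 : Matrix (Fin n) (Fin n) ℂ) :=
  ⟨blockTriangular_one, one_apply_eq⟩

namespace IsUnipUT

variable {n : ℕ} {u B C : Matrix (Fin n) (Fin n) ℂ}

theorem isUnit_det (hu : IsUnipUT u) : IsUnit u.det :=
  IsUpperTriangular.isUnit_det hu.1 fun i => by simp [hu.2 i]

theorem mul_mul_inv (hu : IsUnipUT u) (hB : IsUT B) (hC : IsUT C) (hBC : ∀ i, B i i = C i i)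
    (hC0 : ∀ i, C i i ≠ 0) : IsUnipUT (B * u * C⁻¹) :=
  ⟨BlockTriangular.mul (BlockTriangular.mul hB hu.1) (IsUpperTriangular.inv hC), fun i => by
    rw [IsUpperTriangular.diag_mul_mul_inv hB hu.1 hC hC0, hu.2, hBC, mul_one,
      mul_inv_cancel₀ (hC0 i)]⟩

theorem inv_mul_mul (hu : IsUnipUT u) (hB : IsUT B) (hC : IsUT C) (hBC : ∀ i, B i i = C i i)
    (hB0 : ∀ i, B i i ≠ 0) : IsUnipUT (B⁻¹ * u * C) := by
  have hC0 : ∀ i, C i i ≠ 0 := fun i => hBC i ▸ hB0 i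
  rw [← nonsing_inv_nonsing_inv C (IsUpperTriangular.isUnit_det hC hC0)]
  refine hu.mul_mul_inv (IsUpperTriangular.inv hB) (IsUpperTriangular.inv hC) (fun i => ?_)
    fun i => ?_
  · rw [IsUpperTriangular.inv_apply_self hB hB0, IsUpperTriangular.inv_apply_self hC hC0, hBC]
  · rw [IsUpperTriangular.inv_apply_self hC hC0]
    exact inv_ne_zero (hC0 i)

end IsUnipUT

theorem exists_isUnipUT_path_gauge_eq_diagonal {n : ℕ} (A : ℕ → Matrix (Fin n) (Fin n) ℂ)
    (hA : ∀ k, IsUT (A k)) (hA0 : ∀ k i, A k i i ≠ 0) (fwd : ℕ → Prop) [DecidablePred fwd] :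
    ∃ u : ℕ → Matrix (Fin n) (Fin n) ℂ, (∀ k, IsUnipUT (u k)) ∧ ∀ k,
      (fwd k → u (k + 1) * A k * (u k)⁻¹ = diagonal (A k).diag) ∧
      (¬ fwd k → u k * A k * (u (k + 1))⁻¹ = diagonal (A k).diag) := by
  set D := fun k => diagonal (A k).diag
  have hD : ∀ k, IsUT (D k) := fun k i j hij => diagonal_apply_ne _ hij.ne'
  have hD0 : ∀ k i, D k i i ≠ 0 := fun k i => by simpa [D] using hA0 k i
  have hA1 : ∀ k, IsUnit (A k).det := fun k => IsUpperTriangular.isUnit_det (hA k) (hA0 k)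
  have hD1 : ∀ k, IsUnit (D k).det := fun k => IsUpperTriangular.isUnit_det (hD k) (hD0 k)
  let u : ℕ → Matrix (Fin n) (Fin n) ℂ := fun k => Nat.rec 1
    (fun k uk => if fwd k then D k * uk * (A k)⁻¹ else (D k)⁻¹ * uk * A k) k
  have hu : ∀ k, IsUnipUT (u k) := by
    intro k
    induction k with
    | zero => exact isUnipUT_one
    | succ k ih =>
      show IsUnipUT (if fwd k then _ else _)
      split_ifs
      · exact ih.mul_mul_inv (hD k) (hA k) (fun i => by simp [D]) (hA0 k)
      · exact ih.inv_mul_mul (hD k) (hA k) (fun i => by simp [D]) (hD0 k)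
  refine ⟨u, hu, fun k => ⟨fun hk => ?_, fun hk => ?_⟩⟩
  · show (if fwd k then _ else _) * A k * (u k)⁻¹ = D k
    rw [if_pos hk, nonsing_inv_mul_cancel_right _ _ (hA1 k),
      mul_nonsing_inv_cancel_right _ _ (hu k).isUnit_det]
  · show u k * A k * (if fwd k then _ else _)⁻¹ = D k
    rw [if_neg hk, Matrix.mul_inv_rev, Matrix.mul_inv_rev, nonsing_inv_nonsing_inv _ (hD1 k),
      mul_assoc, mul_nonsing_inv_cancel_left _ _ (hA1 k),
      mul_nonsing_inv_cancel_left _ _ (hu k).isUnit_det]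

def IsPathOrientation {r : ℕ} (tl hd : Fin (r - 1) → Fin r) : Prop :=
  ∀ α : Fin (r - 1), ((tl α : ℕ) = α ∧ (hd α : ℕ) = α + 1) ∨ ((tl α : ℕ) = α + 1 ∧ (hd α : ℕ) = α)

theorem exists_isUnipUT_gauge_eq_diagonal {n r : ℕ} {tl hd : Fin (r - 1) → Fin r}
    (hor : IsPathOrientation tl hd) {A : Fin (r - 1) → Matrix (Fin n) (Fin n) ℂ}
    (hA : ∀ α, IsUT (A α)) (hA0 : ∀ α i, A α i i ≠ 0) :
    ∃ u : Fin r → Matrix (Fin n) (Fin n) ℂ, (∀ v, IsUnipUT (u v)) ∧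
      (fun α => u (hd α) * A α * (u (tl α))⁻¹) = fun α => diagonal (A α).diag := by
  classical
  let A' : ℕ → Matrix (Fin n) (Fin n) ℂ := fun k => if h : k < r - 1 then A ⟨k, h⟩ else 1
  have hA' : ∀ α : Fin (r - 1), A' α = A α := fun α => dif_pos α.isLt
  obtain ⟨u, hu, hgauge⟩ := exists_isUnipUT_path_gauge_eq_diagonal A'
    (fun k => by by_cases h : k < r - 1 <;> simp [A', h, hA _, isUnipUT_one.1])
    (fun k => by by_cases h : k < r - 1 <;> simp [A', h, hA0])
    (fun k => ∃ h : k < r - 1, (tl ⟨k, h⟩ : ℕ) = k)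
  refine ⟨fun v => u v, fun v => hu v, funext fun α => ?_⟩
  rcases hor α with ⟨ht, hh⟩ | ⟨ht, hh⟩
  · simpa only [ht, hh, hA'] using (hgauge α).1 ⟨α.isLt, ht⟩
  · simpa only [ht, hh, hA'] using (hgauge α).2 fun ⟨_, h⟩ => by rw [ht] at h; omega

theorem apply_eq_apply_diagonal_of_invariant {n r : ℕ} {tl hd : Fin (r - 1) → Fin r}
    (hor : IsPathOrientation tl hd) {f : (Fin (r - 1) → Matrix (Fin n) (Fin n) ℂ) → ℂ}
    {P : MvPolynomial (Fin (r - 1) × Fin n × Fin n) ℂ} (hP : ∀ A, f A = eval (entries A) P)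
    (hinv : ∀ u : Fin r → Matrix (Fin n) (Fin n) ℂ, (∀ v, IsUnipUT (u v)) →
      ∀ A : Fin (r - 1) → Matrix (Fin n) (Fin n) ℂ, (∀ α, IsUT (A α)) →
        f (fun α => u (hd α) * A α * (u (tl α))⁻¹) = f A)
    {A : Fin (r - 1) → Matrix (Fin n) (Fin n) ℂ} (hA : ∀ α, IsUT (A α)) :
    f A = f fun α => diagonal (A α).diag := by
  have hdiag : ∀ B, f (fun α => diagonal (B α).diag) =
      eval (entries B) (rename (fun q => (q.1, q.2, q.2)) (restrictDiagonal P)) := fun B => by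
    rw [eval_rename, eval_restrictDiagonal, hP]
    rfl
  rw [hP, hdiag]
  refine eval_entries_eq_of_forall_diag_ne_zero (fun B hB hB0 => ?_) hA
  obtain ⟨u, hu, hgauge⟩ := exists_isUnipUT_gauge_eq_diagonal hor hB hB0
  rw [← hP, ← hdiag, ← hgauge, hinv u hu B hB]

theorem semiInvariants_filtered_Ar_Dynkin_quiver_general
    (n r : ℕ)
    (tl hd : Fin (r - 1) → Fin r)
    (hor : ∀ α : Fin (r - 1),
      (((tl α : ℕ) = (α : ℕ) ∧ (hd α : ℕ) = (α : ℕ) + 1) ∨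
       ((tl α : ℕ) = (α : ℕ) + 1 ∧ (hd α : ℕ) = (α : ℕ))))
    (f : (Fin (r - 1) → Matrix (Fin n) (Fin n) ℂ) → ℂ)
    (hf : ∃ P : MvPolynomial (Fin (r - 1) × Fin n × Fin n) ℂ,
      ∀ A, f A = MvPolynomial.eval (fun q => A q.1 q.2.1 q.2.2) P) :
    (∀ u : Fin r → Matrix (Fin n) (Fin n) ℂ, (∀ v, IsUnipUT (u v)) →
        ∀ A : Fin (r - 1) → Matrix (Fin n) (Fin n) ℂ, (∀ α, IsUT (A α)) →
          f (fun α => u (hd α) * A α * (u (tl α))⁻¹) = f A) ↔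
      ∃ g : MvPolynomial (Fin (r - 1) × Fin n) ℂ,
        ∀ A : Fin (r - 1) → Matrix (Fin n) (Fin n) ℂ, (∀ α, IsUT (A α)) →
          f A = MvPolynomial.eval (fun q => A q.1 q.2 q.2) g := by
  obtain ⟨P, hP⟩ := hf
  constructor
  · intro hinv
    refine ⟨restrictDiagonal P, fun A hA => ?_⟩
    rw [apply_eq_apply_diagonal_of_invariant hor hP hinv hA, eval_restrictDiagonal, hP]
    rfl
  · rintro ⟨g, hg⟩ u hu A hA
    have hu0 : ∀ v i, u v i i ≠ 0 := fun v i => by simp [(hu v).2 i]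
    have hgauge : ∀ α, IsUT (u (hd α) * A α * (u (tl α))⁻¹) := fun α =>
      BlockTriangular.mul (BlockTriangular.mul (hu _).1 (hA α)) (IsUpperTriangular.inv (hu _).1)
    rw [hg _ hgauge, hg A hA]
    refine congrArg (eval · g) (funext fun ⟨α, i⟩ => ?_)
    simp [IsUpperTriangular.diag_mul_mul_inv (hu _).1 (hA α) (hu _).1 (hu0 _), (hu _).2]

/-- Semi-invariants of filtered `A_r`-Dynkin quivers:
for any orientation of the `A_r`-Dynkin graph (vertices `Fin r`, arrows `Fin (r-1)`,
the `α`-th arrow joining the vertices `α` and `α+1` in either direction), a polynomial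
function `f` on `𝔟ₙ^{⊕(r-1)}` is invariant under the change-of-basis action of
`Uₙ^r` iff it is a polynomial in the diagonal entries of the matrices; i.e.
`ℂ[F•Rep(Q,β)]^{𝕌_β} = ℂ[𝔱ₙ^{⊕(r-1)}]`. -/
theorem semiInvariants_filtered_Ar_Dynkin_quiver
    (n r : ℕ) (hn : 1 ≤ n) (hr : 2 ≤ r)
    (tl hd : Fin (r - 1) → Fin r)
    (hor : ∀ α : Fin (r - 1),
      (((tl α : ℕ) = (α : ℕ) ∧ (hd α : ℕ) = (α : ℕ) + 1) ∨
       ((tl α : ℕ) = (α : ℕ) + 1 ∧ (hd α : ℕ) = (α : ℕ))))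
    (f : (Fin (r - 1) → Matrix (Fin n) (Fin n) ℂ) → ℂ)
    (hf : ∃ P : MvPolynomial (Fin (r - 1) × Fin n × Fin n) ℂ,
      ∀ A, f A = MvPolynomial.eval (fun q => A q.1 q.2.1 q.2.2) P) :
    (∀ u : Fin r → Matrix (Fin n) (Fin n) ℂ, (∀ v, IsUnipUT (u v)) →
        ∀ A : Fin (r - 1) → Matrix (Fin n) (Fin n) ℂ, (∀ α, IsUT (A α)) →
          f (fun α => u (hd α) * A α * (u (tl α))⁻¹) = f A) ↔
      ∃ g : MvPolynomial (Fin (r - 1) × Fin n) ℂ,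
        ∀ A : Fin (r - 1) → Matrix (Fin n) (Fin n) ℂ, (∀ α, IsUT (A α)) →
          f A = MvPolynomial.eval (fun q => A q.1 q.2 q.2) g :=
  semiInvariants_filtered_Ar_Dynkin_quiver_general n r tl hd hor f hf
end

section
/- (Lemma: bottom-row bideterminants of path products are unipotent invariants for the equioriented framed A-type quiver.) Let n, m ≥ 1 and r ≥ 0. For unipotent upper triangular n×n complex matrices u_1, …, u_{r+1}, an n×m complex matrix A_0, and upper triangular n×n complex matrices A_1, …, A_r, set A_0' = u_1 A_0 and A_α' = u_{α+1} A_α u_α^{−1} for 1 ≤ α ≤ r (this is the action of 𝕌_β = U_n^{r+1} on F•Rep(Q,β) = M_{n×m}(ℂ) ⊕ 𝔟_n^{⊕r}). Then for every 0 ≤ l ≤ r, every 1 ≤ p ≤ n with n−p+1 ≤ m, and all column indices 1 ≤ i_1 < ⋯ < i_{n−p+1} ≤ m, one has (p p+1 ⋯ n | i_1 ⋯ i_{n−p+1})_{A_l' A_{l−1}' ⋯ A_1' A_0'} = (p p+1 ⋯ n | i_1 ⋯ i_{n−p+1})_{A_l A_{l−1} ⋯ A_1 A_0}; that is, these bideterminants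 are 𝕌_β-invariant polynomial functions. -/
/-- The (0-indexed) window of rows `p, p+1, …, n` (1-indexed), viewed as an embedding
`Fin (n - p + 1) → Fin n`, `k ↦ (p - 1) + k`. -/
def rowWindow (n p : ℕ) (hp : 1 ≤ p) (hpn : p ≤ n) (k : Fin (n - p + 1)) : Fin n :=
  ⟨p - 1 + k.val, by have hk := k.isLt; omega⟩

/-- The path product `A_l ⋯ A_1 A_0` of general representations along the equioriented
framed `A`-type quiver `1' → 1 → 2 → ⋯ → r+1`. -/
noncomputable def pathProd {n m : ℕ} (A0 : Matrix (Fin n) (Fin m) ℂ)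
    (A : ℕ → Matrix (Fin n) (Fin n) ℂ) : ℕ → Matrix (Fin n) (Fin m) ℂ
  | 0 => A0
  | l + 1 => A (l + 1) * pathProd A0 A l

/-!
The action telescopes along the path: `u_{α+1} A_α u_α⁻¹ ⋯ u_2 A_1 u_1⁻¹ · u_1 A_0` collapses to
`u_{l+1} (A_l ⋯ A_0)`. Since `u_{l+1}` is upper triangular, rows `p, …, n` of `u_{l+1} X` only
involve rows `p, …, n` of `X`, through the lower-right corner of `u_{l+1}`, which is again
unipotent and hence has determinant `1`.
-/

lemma IsUnipUT.det_eq_one {n : ℕ} {M : Matrix (Fin n) (Fin n) ℂ} (h : IsUnipUT M) :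
    M.det = 1 := by
  simp [Matrix.det_of_isUpperTriangular (h.1 : M.IsUpperTriangular), h.2]

lemma IsUnipUT.submatrix {n k : ℕ} {M : Matrix (Fin n) (Fin n) ℂ} (h : IsUnipUT M)
    {e : Fin k → Fin n} (he : StrictMono e) : IsUnipUT (M.submatrix e e) :=
  ⟨fun i j hij => h.1 (e i) (e j) (he hij), fun i => h.2 (e i)⟩

lemma pathProd_conj {n m l : ℕ} (u : ℕ → Matrix (Fin n) (Fin n) ℂ)
    (hu : ∀ v, 1 ≤ v → v ≤ l → IsUnit (u v).det)
    (A0 : Matrix (Fin n) (Fin m) ℂ) (A : ℕ → Matrix (Fin n) (Fin n) ℂ) :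
    pathProd (u 1 * A0) (fun α => u (α + 1) * A α * (u α)⁻¹) l = u (l + 1) * pathProd A0 A l := by
  induction l with
  | zero => rfl
  | succ l ih =>
    have hinv : (u (l + 1))⁻¹ * u (l + 1) = 1 :=
      Matrix.nonsing_inv_mul _ (hu (l + 1) le_add_self le_rfl)
    calc pathProd (u 1 * A0) (fun α => u (α + 1) * A α * (u α)⁻¹) (l + 1)
        = u (l + 2) * A (l + 1) * (u (l + 1))⁻¹ * (u (l + 1) * pathProd A0 A l) := by
          rw [pathProd, ih fun v hv hvl => hu v hv (by omega)]
      _ = u (l + 2) * A (l + 1) * ((u (l + 1))⁻¹ * u (l + 1)) * pathProd A0 A l := by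
          simp only [Matrix.mul_assoc]
      _ = u (l + 2) * pathProd A0 A (l + 1) := by
          rw [hinv, Matrix.mul_one, Matrix.mul_assoc, pathProd]

section rowWindow

variable {n p : ℕ} (hp : 1 ≤ p) (hpn : p ≤ n)

lemma strictMono_rowWindow : StrictMono (rowWindow n p hp hpn) :=
  fun a b hab => show p - 1 + a.val < p - 1 + b.val by omega

lemma mem_range_rowWindow {t : Fin n} : t ∈ Set.range (rowWindow n p hp hpn) ↔ p - 1 ≤ t.val :=
  ⟨fun ⟨k, hk⟩ => hk ▸ Nat.le_add_right _ _,
    fun ht => ⟨⟨t.val - (p - 1), by omega⟩, Fin.ext (by simp only [rowWindow]; omega)⟩⟩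

lemma IsUT.submatrix_rowWindow_mul {m : ℕ} {u : Matrix (Fin n) (Fin n) ℂ} (hu : IsUT u)
    (M : Matrix (Fin n) (Fin m) ℂ) {k : ℕ} (cols : Fin k → Fin m) :
    (u * M).submatrix (rowWindow n p hp hpn) cols =
      u.submatrix (rowWindow n p hp hpn) (rowWindow n p hp hpn) *
        M.submatrix (rowWindow n p hp hpn) cols := by
  ext i j
  refine (Fintype.sum_of_injective _ (strictMono_rowWindow hp hpn).injective _ _
    (fun t ht => ?_) fun _ => rfl).symm
  rw [mem_range_rowWindow] at ht
  exact mul_eq_zero_of_left (hu _ _ (show t.val < p - 1 + i.val by omega)) _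

lemma IsUnipUT.det_submatrix_rowWindow_mul {m : ℕ} {u : Matrix (Fin n) (Fin n) ℂ}
    (hu : IsUnipUT u) (M : Matrix (Fin n) (Fin m) ℂ) (cols : Fin (n - p + 1) → Fin m) :
    ((u * M).submatrix (rowWindow n p hp hpn) cols).det =
      (M.submatrix (rowWindow n p hp hpn) cols).det := by
  rw [hu.1.submatrix_rowWindow_mul, Matrix.det_mul,
    (hu.submatrix (strictMono_rowWindow hp hpn)).det_eq_one, one_mul]

end rowWindow

theorem bideterminant_pathProd_unipotent_invariant_general
    (n m r : ℕ)
    (u : ℕ → Matrix (Fin n) (Fin n) ℂ)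
    (hu : ∀ v, 1 ≤ v → v ≤ r + 1 → IsUnipUT (u v))
    (A0 : Matrix (Fin n) (Fin m) ℂ)
    (A : ℕ → Matrix (Fin n) (Fin n) ℂ)
    (l : ℕ) (hl : l ≤ r)
    (p : ℕ) (hp1 : 1 ≤ p) (hpn : p ≤ n)
    (cols : Fin (n - p + 1) → Fin m) :
    Matrix.det
        ((pathProd (u 1 * A0) (fun α => u (α + 1) * A α * (u α)⁻¹) l).submatrix
          (rowWindow n p hp1 hpn) cols) =
      Matrix.det ((pathProd A0 A l).submatrix (rowWindow n p hp1 hpn) cols) := by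
  rw [pathProd_conj u (fun v hv hvl => by simp [(hu v hv (by omega)).det_eq_one]) A0 A]
  exact (hu (l + 1) le_add_self (by omega)).det_submatrix_rowWindow_mul hp1 hpn _ cols

/-- Bottom-row bideterminants of the path products `A_l A_{l-1} ⋯ A_1 A_0` are
invariant under the action of `𝕌_β = Uₙ^{r+1}` on
`F•Rep(Q,β) = M_{n×m}(ℂ) ⊕ 𝔟ₙ^{⊕r}`, where the action transforms `A_0 ↦ u_1 A_0` and
`A_α ↦ u_{α+1} A_α u_α⁻¹` for `1 ≤ α ≤ r`. -/
theorem bideterminant_pathProd_unipotent_invariant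
    (n m r : ℕ) (hn : 1 ≤ n) (hm : 1 ≤ m)
    (u : ℕ → Matrix (Fin n) (Fin n) ℂ)
    (hu : ∀ v, 1 ≤ v → v ≤ r + 1 → IsUnipUT (u v))
    (A0 : Matrix (Fin n) (Fin m) ℂ)
    (A : ℕ → Matrix (Fin n) (Fin n) ℂ)
    (hA : ∀ α, 1 ≤ α → α ≤ r → IsUT (A α))
    (l : ℕ) (hl : l ≤ r)
    (p : ℕ) (hp1 : 1 ≤ p) (hpn : p ≤ n) (hpm : n - p + 1 ≤ m)
    (cols : Fin (n - p + 1) → Fin m) (hcols : StrictMono cols) :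
    Matrix.det
        ((pathProd (u 1 * A0) (fun α => u (α + 1) * A α * (u α)⁻¹) l).submatrix
          (rowWindow n p hp1 hpn) cols) =
      Matrix.det ((pathProd A0 A l).submatrix (rowWindow n p hp1 hpn) cols) :=
  bideterminant_pathProd_unipotent_invariant_general n m r u hu A0 A l hl p hp1 hpn cols
end

section
/- (Lemma: B-invariants on 𝔟*.) Let B_n act on 𝔟*_n by b·s = π(b s b^{−1}). Then a polynomial function F on 𝔟*_n (the lower triangular n×n complex matrices) is B_n-invariant if and only if there is a single-variable polynomial g with F(s) = g(tr(s)) for every lower triangular matrix s; that is, ℂ[𝔟*]^B = ℂ[tr(s)]. -/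
/-- `M` is a lower triangular complex matrix (the chosen representatives of
`𝔟*ₙ = 𝔤𝔩ₙ/𝔫⁺`). -/
def IsLT {n : ℕ} (M : Matrix (Fin n) (Fin n) ℂ) : Prop :=
  ∀ i j : Fin n, i < j → M i j = 0

/-- The projection `π : 𝔤𝔩ₙ → 𝔟*ₙ` zeroing out all entries strictly above the
diagonal. -/
def lowProj {n : ℕ} (M : Matrix (Fin n) (Fin n) ℂ) : Matrix (Fin n) (Fin n) ℂ :=
  Matrix.of fun i j => if j ≤ i then M i j else 0

/-!
Conjugation by the torus element `diag(tⁱ)` multiplies the entry `(i, j)` of a lower triangular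
`s` by `t^(i-j)`, so `t ↦ F(diag(tⁱ) s diag(tⁱ)⁻¹)` extends to a polynomial in `t` that is constant
on `t ≠ 0`; its value at `t = 0` gives `F s = F (diag s)`. For `j < k`, conjugating `diag d + E_kj` by `1 + c E_jk` and
projecting yields `diag (d + c eⱼ - c eₖ) + E_kj`, so `d ↦ F (diag d)` is unchanged when mass is
moved between diagonal entries and therefore depends only on `∑ dᵢ = tr s`.
-/
open Matrix Polynomial

theorem MvPolynomial.exists_polynomial_eval_eq_eval_eval {σ R : Type*} [CommRing R]
    (P : MvPolynomial σ R) (g : σ → R[X]) :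
    ∃ Q : R[X], ∀ t, Q.eval t = MvPolynomial.eval (fun i => (g i).eval t) P :=
  ⟨MvPolynomial.aeval g P, fun t => by
    simpa [coe_aeval_eq_eval] using MvPolynomial.comp_aeval_apply (f := g) (Polynomial.aeval t) P⟩

theorem Polynomial.eq_C_of_eval_eq_of_ne {R : Type*} [CommRing R] [IsDomain R] [Infinite R]
    {Q : R[X]} {a c : R} (h : ∀ t ≠ a, Q.eval t = c) : Q = C c :=
  eq_of_infinite_eval_eq _ _ <| (Set.finite_singleton a).infinite_compl.mono
    fun t ht => by simpa using h t ht

theorem Finset.apply_add_sum_eq {ι V X : Type*} [AddCommMonoid V] {Φ : V → X} {f : ι → V}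
    (h : ∀ v i, Φ (v + f i) = Φ v) (s : Finset ι) (v : V) : Φ (v + ∑ i ∈ s, f i) = Φ v := by
  classical
  induction s using Finset.induction_on with
  | empty => simp
  | insert i s hi ih => rw [Finset.sum_insert hi, ← add_assoc, add_right_comm, h, ih]

namespace Matrix

variable {ι α : Type*} [Fintype ι] [DecidableEq ι] [NonUnitalNonAssocSemiring α]

theorem single_mul_diagonal (i j : ι) (c : α) (d : ι → α) :
    single i j c * diagonal d = single i j (c * d j) := by
  ext a b
  by_cases h : i = a ∧ j = b
  · obtain ⟨rfl, rfl⟩ := h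
    simp
  · simp [mul_diagonal, h]

theorem diagonal_mul_single (i j : ι) (c : α) (d : ι → α) :
    diagonal d * single i j c = single i j (d i * c) := by
  ext a b
  by_cases h : i = a ∧ j = b
  · obtain ⟨rfl, rfl⟩ := h
    simp
  · simp [diagonal_mul, h]

end Matrix

section

variable {n : ℕ}

def IsPolynomialFunction (F : Matrix (Fin n) (Fin n) ℂ → ℂ) : Prop :=
  ∃ P : MvPolynomial (Fin n × Fin n) ℂ, ∀ s, F s = MvPolynomial.eval (fun q => s q.1 q.2) P

def IsBorelInvariant (F : Matrix (Fin n) (Fin n) ℂ → ℂ) : Prop :=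
  ∀ b : Matrix (Fin n) (Fin n) ℂ, IsUT b → IsUnit b.det →
    ∀ s : Matrix (Fin n) (Fin n) ℂ, IsLT s → F (lowProj (b * s * b⁻¹)) = F s

theorem IsPolynomialFunction.exists_eval_eq_apply_map {F : Matrix (Fin n) (Fin n) ℂ → ℂ}
    (hF : IsPolynomialFunction F) (M : Matrix (Fin n) (Fin n) ℂ[X]) :
    ∃ Q : ℂ[X], ∀ t, Q.eval t = F (M.map (eval t)) := by
  obtain ⟨P, hP⟩ := hF
  obtain ⟨Q, hQ⟩ := MvPolynomial.exists_polynomial_eval_eq_eval_eval P fun q => M q.1 q.2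
  exact ⟨Q, fun t => by rw [hQ, hP]; rfl⟩

theorem lowProj_of_isLT {M : Matrix (Fin n) (Fin n) ℂ} (h : IsLT M) : lowProj M = M := by
  ext i j
  by_cases hij : j ≤ i
  · simp [lowProj, hij]
  · simp [lowProj, hij, h i j (not_le.1 hij)]

theorem isLT_lowProj (M : Matrix (Fin n) (Fin n) ℂ) : IsLT (lowProj M) :=
  fun _ _ hij => if_neg (not_le.2 hij)

theorem trace_lowProj (M : Matrix (Fin n) (Fin n) ℂ) : (lowProj M).trace = M.trace := by
  simp [trace, lowProj]

theorem lowProj_add_single_of_lt {j k : Fin n} (hjk : j < k) (M : Matrix (Fin n) (Fin n) ℂ)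
    (c : ℂ) : lowProj (M + single j k c) = lowProj M := by
  ext a b
  by_cases hba : b ≤ a
  · have : ¬(j = a ∧ k = b) := by
      rintro ⟨rfl, rfl⟩
      exact (hba.trans_lt hjk).false
    simp [lowProj, hba, single_apply_of_ne _ _ _ _ _ this]
  · simp [lowProj, hba]

theorem isUT_diagonal (d : Fin n → ℂ) : IsUT (diagonal d) :=
  fun _ _ hij => diagonal_apply_ne _ hij.ne'

theorem isLT_diagonal_add_single {j k : Fin n} (hjk : j < k) (d : Fin n → ℂ) (c : ℂ) :
    IsLT (diagonal d + single k j c) := by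
  intro a b hab
  have : ¬(k = a ∧ j = b) := by
    rintro ⟨rfl, rfl⟩
    exact (hab.trans hjk).false
  simp [diagonal_apply_ne _ hab.ne, single_apply_of_ne _ _ _ _ _ this]

theorem diagonal_mul_mul_inv_diagonal_apply {v : Fin n → ℂ} (hv : ∀ i, v i ≠ 0)
    (s : Matrix (Fin n) (Fin n) ℂ) (i j : Fin n) :
    (diagonal v * s * (diagonal v)⁻¹) i j = v i * s i j / v j := by
  have hinv : (diagonal v)⁻¹ = diagonal fun i => (v i)⁻¹ :=
    inv_eq_right_inv <| by simp [diagonal_mul_diagonal, mul_inv_cancel₀ (hv _)]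
  simp [hinv, div_eq_mul_inv]

namespace IsBorelInvariant

variable {F : Matrix (Fin n) (Fin n) ℂ → ℂ}

theorem apply_diagonal_diag (hF : IsPolynomialFunction F) (hB : IsBorelInvariant F)
    {s : Matrix (Fin n) (Fin n) ℂ} (hs : IsLT s) : F (diagonal s.diag) = F s := by
  obtain ⟨Q, hQ⟩ := hF.exists_eval_eq_apply_map (of fun i j => C (s i j) * X ^ ((i : ℕ) - j))
  have hconj : ∀ t ≠ 0, Q.eval t = F s := by
    intro t ht
    have hv : ∀ i : Fin n, t ^ (i : ℕ) ≠ 0 := fun i => pow_ne_zero _ ht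
    rw [hQ, ← hB (diagonal fun i : Fin n => t ^ (i : ℕ)) (isUT_diagonal _)
      (by simp [det_diagonal, Finset.prod_ne_zero_iff, hv]) s hs]
    congr 1
    ext i j
    by_cases hji : j ≤ i
    · simp [lowProj, hji, diagonal_mul_mul_inv_diagonal_apply hv, pow_sub₀ t ht hji]
      ring
    · simp [lowProj, hji, hs i j (not_le.1 hji)]
  have h0 := hQ 0
  rw [eq_C_of_eval_eq_of_ne hconj, eval_C] at h0
  rw [h0]
  congr 1
  ext i j
  rcases lt_trichotomy i j with hij | rfl | hij
  · simp [hij.ne, hs i j hij]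
  · simp
  · simp [hij.ne', Nat.sub_ne_zero_of_lt (Fin.lt_def.1 hij)]

theorem apply_diagonal_add_single_sub_single_of_lt (hF : IsPolynomialFunction F)
    (hB : IsBorelInvariant F) {j k : Fin n} (hjk : j < k) (d : Fin n → ℂ) (c : ℂ) :
    F (diagonal (d + Pi.single j c - Pi.single k c)) = F (diagonal d) := by
  set A : Matrix (Fin n) (Fin n) ℂ := single j k c
  set N : Matrix (Fin n) (Fin n) ℂ := single k j 1
  have hLT : ∀ v, IsLT (diagonal v + N) := fun v => isLT_diagonal_add_single hjk v 1
  have hdiag : ∀ v, (diagonal v + N).diag = v := fun v => by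
    simp [N, diag_single_of_ne _ _ _ hjk.ne']
  have hAA : A * A = 0 := single_mul_single_of_ne _ _ _ _ hjk.ne' _
  have hunit : (1 + A) * (1 - A) = 1 := by
    rw [add_mul, one_mul, mul_sub, mul_one, hAA, sub_zero, sub_add_cancel]
  have hUT : IsUT (1 + A) := by
    intro a b hba
    have : ¬(j = a ∧ k = b) := by
      rintro ⟨rfl, rfl⟩
      exact (hba.trans hjk).false
    simp [A, one_apply_ne hba.ne', single_apply_of_ne _ _ _ _ _ this]
  have hdet : IsUnit (1 + A).det :=
    IsUnit.of_mul_eq_one (1 - A).det (by rw [← det_mul, hunit, det_one])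
  have hconj : (1 + A) * (diagonal d + N) * (1 + A)⁻¹
      = diagonal (d + Pi.single j c - Pi.single k c) + N
        + single j k (c * d k - d j * c - c * c) := by
    rw [inv_eq_right_inv hunit]
    have hexpand : ∀ X : Matrix (Fin n) (Fin n) ℂ,
        (1 + A) * X * (1 - A) = X + A * X - X * A - A * X * A := fun X => by noncomm_ring
    rw [hexpand]
    simp only [A, N]
    rw [single_mul_mul_single]
    have hsub : ∀ x y : ℂ, single j k (x - y) = single j k x - single j k y :=
      map_sub (singleAddMonoidHom j k)
    have hd : diagonal (d + Pi.single j c - Pi.single k c)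
        = diagonal d + single j j c - single k k c := by
      rw [← diagonal_single, ← diagonal_single, diagonal_add, diagonal_sub]
      rfl
    rw [hd]
    simp only [mul_add, add_mul, single_mul_diagonal, diagonal_mul_single, single_mul_single_same,
      Matrix.add_apply, diagonal_apply_ne _ hjk.ne', single_apply_same, hsub, mul_zero, zero_mul,
      mul_one, one_mul]
    abel_nf
  calc F (diagonal (d + Pi.single j c - Pi.single k c))
      = F (diagonal (d + Pi.single j c - Pi.single k c) + N) := by
        rw [← hB.apply_diagonal_diag hF (hLT _), hdiag]
    _ = F (lowProj ((1 + A) * (diagonal d + N) * (1 + A)⁻¹)) := by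
        rw [hconj, lowProj_add_single_of_lt hjk, lowProj_of_isLT (hLT _)]
    _ = F (diagonal d + N) := hB _ hUT hdet _ (hLT d)
    _ = F (diagonal d) := by rw [← hB.apply_diagonal_diag hF (hLT d), hdiag]

theorem apply_diagonal_add_single_sub_single (hF : IsPolynomialFunction F)
    (hB : IsBorelInvariant F) (j k : Fin n) (d : Fin n → ℂ) (c : ℂ) :
    F (diagonal (d + Pi.single j c - Pi.single k c)) = F (diagonal d) := by
  rcases lt_trichotomy j k with hjk | rfl | hkj
  · exact hB.apply_diagonal_add_single_sub_single_of_lt hF hjk d c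
  · simp
  · rw [← hB.apply_diagonal_add_single_sub_single_of_lt hF hkj d (-c), Pi.single_neg,
      Pi.single_neg]
    abel_nf

theorem apply_diagonal_eq_apply_diagonal_single_sum (hF : IsPolynomialFunction F)
    (hB : IsBorelInvariant F) (i₀ : Fin n) (d : Fin n → ℂ) :
    F (diagonal d) = F (diagonal (Pi.single i₀ (∑ i, d i))) := by
  have hd : d = Pi.single i₀ (∑ i, d i) + ∑ i, (Pi.single i₀ (-d i) - Pi.single i (-d i)) := by
    ext j
    by_cases hj : j = i₀ <;> simp [Finset.sum_apply, Pi.single_apply, hj]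
  conv_lhs => rw [hd]
  exact Finset.apply_add_sum_eq (Φ := fun v => F (diagonal v))
    (fun v i => by rw [← add_sub_assoc]; exact hB.apply_diagonal_add_single_sub_single hF i₀ i v _)
    _ _

theorem of_eq_eval_trace {g : ℂ[X]}
    (hg : ∀ s : Matrix (Fin n) (Fin n) ℂ, IsLT s → F s = g.eval s.trace) :
    IsBorelInvariant F := by
  intro b _ hb s hs
  rw [hg _ (isLT_lowProj _), hg s hs, trace_lowProj, trace_conj ((isUnit_iff_isUnit_det b).2 hb)]

end IsBorelInvariant

end

/-- `B`-invariants on `𝔟*`: for the action `b · s = π(b s b⁻¹)` of the Borel `Bₙ` on the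
lower triangular matrices `𝔟*ₙ`, a polynomial function `F` is `Bₙ`-invariant iff it is a
single-variable polynomial in the trace of `s`; i.e. `ℂ[𝔟*]^B = ℂ[tr(s)]`. -/
theorem invariants_borel_on_bdual
    (n : ℕ) (hn : 1 ≤ n)
    (F : Matrix (Fin n) (Fin n) ℂ → ℂ)
    (hF : ∃ P : MvPolynomial (Fin n × Fin n) ℂ,
      ∀ s, F s = MvPolynomial.eval (fun q => s q.1 q.2) P) :
    (∀ b : Matrix (Fin n) (Fin n) ℂ, IsUT b → IsUnit b.det →
        ∀ s : Matrix (Fin n) (Fin n) ℂ, IsLT s →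
          F (lowProj (b * s * b⁻¹)) = F s) ↔
      ∃ g : Polynomial ℂ, ∀ s : Matrix (Fin n) (Fin n) ℂ, IsLT s →
        F s = Polynomial.eval (Matrix.trace s) g := by
  refine ⟨fun (hB : IsBorelInvariant F) => ?_,
    fun ⟨g, hg⟩ => IsBorelInvariant.of_eq_eval_trace hg⟩
  let i₀ : Fin n := ⟨0, hn⟩
  obtain ⟨g, hg⟩ :=
    IsPolynomialFunction.exists_eval_eq_apply_map hF (diagonal (Pi.single i₀ X))
  refine ⟨g, fun s hs => ?_⟩
  rw [← hB.apply_diagonal_diag hF hs, hB.apply_diagonal_eq_apply_diagonal_single_sum hF i₀, hg,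
    diagonal_map (eval_zero (x := s.trace)),
    ← Pi.single_op (fun _ => eval s.trace) (fun _ => eval_zero), eval_X]
  rfl
end

section
/- (Lemma: vanishing pattern of the product ∏_{k≠ι}(r − r_{kk}I).) Let r be an upper triangular n×n complex matrix whose diagonal entries are pairwise distinct, and fix 1 ≤ ι ≤ n. Then the matrix P = ∏_{k≠ι}(r − r_{kk}·I) vanishes strictly to the left of the ι-th column and strictly below the ι-th row: P_{γμ} = 0 whenever μ < ι or γ > ι. -/
/-!
For `P_S = ∏_{k ∈ S} (r - r_kk I)`, the entry `(P_S)_{γμ}` vanishes as soon as `[γ, μ] ⊆ S`,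
by induction on `S`. Splitting off the factor `r - r_μμ I`, every term of
`(P_S)_{γμ} = ∑ j, (P_{S \ μ})_{γj} (r - r_μμ I)_{jμ}` vanishes: for `j > μ` by triangularity,
for `j = μ` because that diagonal entry is zero, and for `j < μ` by induction, since
`[γ, j] ⊆ S \ {μ}`.
-/

open Polynomial Finset

namespace Matrix

variable {m R : Type*} [Fintype m] [DecidableEq m] [CommRing R]

theorem aeval_X_sub_C_diag_apply_self (r : Matrix m m R) (i : m) :
    aeval r (X - C (r i i)) i i = 0 := by
  simp [algebraMap_matrix_apply]

variable [LinearOrder m] {r : Matrix m m R}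

theorem isUpperTriangular_aeval (hr : r.IsUpperTriangular) (p : R[X]) :
    (aeval r p).IsUpperTriangular := by
  induction p using Polynomial.induction_on' with
  | add p q hp hq => rw [map_add]; exact hp.add hq
  | monomial n a => rw [aeval_monomial]; exact (blockTriangular_algebraMap a).mul (hr.pow n)

theorem aeval_prod_X_sub_C_diag_apply_eq_zero (hr : r.IsUpperTriangular)
    {S : Finset m} {γ μ : m} (hS : Set.Icc γ μ ⊆ S) :
    aeval r (∏ k ∈ S, (X - C (r k k))) γ μ = 0 := by
  induction S using Finset.strongInduction generalizing μ with
  | H S ih =>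
    rcases lt_or_ge μ γ with hμγ | hγμ
    · exact isUpperTriangular_aeval hr _ hμγ
    have hμS : μ ∈ S := hS ⟨hγμ, le_rfl⟩
    rw [← prod_erase_mul S _ hμS, map_mul, mul_apply]
    refine sum_eq_zero fun j _ => ?_
    rcases lt_trichotomy j μ with hj | rfl | hj
    · rw [ih _ (erase_ssubset hμS) fun k hk => ?_, zero_mul]
      exact mem_erase.2 ⟨(hk.2.trans_lt hj).ne, hS ⟨hk.1, hk.2.trans hj.le⟩⟩
    · rw [aeval_X_sub_C_diag_apply_self, mul_zero]
    · rw [isUpperTriangular_aeval hr _ hj, mul_zero]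

end Matrix

theorem prod_shifted_vanishing_pattern_general
    (n : ℕ)
    (r : Matrix (Fin n) (Fin n) ℂ) (hr : IsUT r)
    (ι γ μ : Fin n) (hgm : μ < ι ∨ ι < γ) :
    ((Polynomial.aeval r)
        (∏ k ∈ Finset.univ.erase ι, (Polynomial.X - Polynomial.C (r k k)))) γ μ = 0 := by
  refine Matrix.aeval_prod_X_sub_C_diag_apply_eq_zero
    (fun i j h => hr i j h) fun k hk => mem_erase.2 ⟨?_, mem_univ k⟩
  rintro rfl
  exact hgm.elim hk.2.not_gt hk.1.not_gt

/-- Vanishing pattern of the product `P = ∏_{k ≠ ι} (r − r_{kk}·I)` for a regular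
semisimple upper triangular matrix `r`: `P` vanishes strictly to the left of the `ι`-th
column and strictly below the `ι`-th row, i.e. `P_{γμ} = 0` whenever `μ < ι` or
`γ > ι`. -/
theorem prod_shifted_vanishing_pattern
    (n : ℕ) (hn : 1 ≤ n)
    (r : Matrix (Fin n) (Fin n) ℂ) (hr : IsUT r)
    (hdist : ∀ i j : Fin n, i ≠ j → r i i ≠ r j j)
    (ι γ μ : Fin n) (hgm : μ < ι ∨ ι < γ) :
    ((Polynomial.aeval r)
        (∏ k ∈ Finset.univ.erase ι, (Polynomial.X - Polynomial.C (r k k)))) γ μ = 0 :=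
  prod_shifted_vanishing_pattern_general n r hr ι γ μ hgm
end

section
/- (Proposition: diagonal coordinates of the conjugate of s are traces against the spectral projections.) Let r be an upper triangular n×n complex matrix with pairwise distinct diagonal entries, and let b be an invertible upper triangular n×n complex matrix with b r b^{−1} = diag(r). Then for every lower triangular n×n complex matrix s and every 1 ≤ ι ≤ n, (b s b^{−1})_{ιι} = tr(L^ι(r) · s). -/
/-- The spectral projection
`L^ι(r) = (∏_{k ≠ ι} (r_{ιι} − r_{kk}))⁻¹ • ∏_{k ≠ ι} (r − r_{kk}·I)`. -/
noncomputable def Lop {n : ℕ} (r : Matrix (Fin n) (Fin n) ℂ) (ι : Fin n) :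
    Matrix (Fin n) (Fin n) ℂ :=
  (∏ k ∈ Finset.univ.erase ι, (r ι ι - r k k))⁻¹ •
    (Polynomial.aeval r)
      (∏ k ∈ Finset.univ.erase ι, (Polynomial.X - Polynomial.C (r k k)))

/-!
`L^ι(r)` is the Lagrange basis polynomial `ℓ_ι` of the nodes `r₁₁, …, rₙₙ` evaluated at `r`.
Polynomial evaluation commutes with conjugation, so `b L^ι(r) b⁻¹ = ℓ_ι(diag r) = E_ιι`, and
cyclicity of the trace gives `tr(L^ι(r) s) = tr(E_ιι · b s b⁻¹) = (b s b⁻¹)_ιι`.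
-/

open Polynomial Matrix

theorem Polynomial.aeval_units_conj {R A : Type*} [CommSemiring R] [Semiring A] [Algebra R A]
    (u : Aˣ) (a : A) (p : R[X]) :
    aeval (↑u * a * ↑u⁻¹) p = ↑u * aeval a p * ↑u⁻¹ :=
  aeval_algHom_apply (MulSemiringAction.toAlgEquiv R A (ConjAct.toConjAct u)) a p

theorem Matrix.aeval_diagonal {n R : Type*} [Fintype n] [DecidableEq n] [CommSemiring R]
    (d : n → R) (p : R[X]) :
    aeval (diagonal d) p = diagonal fun i => p.eval (d i) := by
  rw [← diagonalAlgHom_apply R, aeval_algHom_apply, aeval_pi_apply]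
  simp only [coe_aeval_eq_eval]
  rfl

theorem Lagrange.basis_eq_inv_eval_mul_nodal_erase {F ι : Type*} [Field F] [DecidableEq ι]
    {s : Finset ι} {v : ι → F} {i : ι} (hi : i ∈ s) :
    Lagrange.basis s v i = C (eval (v i) (nodal (s.erase i) v))⁻¹ * nodal (s.erase i) v := by
  rw [basis_eq_prod_sub_inv_mul_nodal_div hi, nodalWeight_eq_eval_nodal_erase_inv,
    nodal_erase_eq_nodal_div hi]

theorem Matrix.aeval_diagonal_lagrange_basis {F ι : Type*} [Field F] [Fintype ι] [DecidableEq ι]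
    {v : ι → F} (hv : Function.Injective v) (i : ι) :
    aeval (diagonal v) (Lagrange.basis Finset.univ v i) = single i i 1 := by
  rw [aeval_diagonal, ← diagonal_single]
  congr 1
  funext j
  rcases eq_or_ne i j with rfl | hij
  · simp [Lagrange.eval_basis_self hv.injOn (Finset.mem_univ i)]
  · simp [Lagrange.eval_basis_of_ne hij (Finset.mem_univ j), hij]

theorem Matrix.trace_mul_single_mul_mul {n R : Type*} [Fintype n] [DecidableEq n]
    [CommSemiring R] (A B M : Matrix n n R) (i : n) :
    trace (A * single i i 1 * B * M) = (B * M * A) i i := by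
  rw [Matrix.mul_assoc _ B, trace_mul_cycle, trace_mul_comm, trace_single_mul, one_smul]

theorem Lop_eq_aeval_lagrange_basis {n : ℕ} (r : Matrix (Fin n) (Fin n) ℂ) (ι : Fin n) :
    Lop r ι = aeval r (Lagrange.basis Finset.univ (fun k => r k k) ι) := by
  rw [Lagrange.basis_eq_inv_eval_mul_nodal_erase (Finset.mem_univ ι), map_mul, aeval_C,
    Algebra.algebraMap_eq_smul_one, smul_mul_assoc, one_mul, Lagrange.eval_nodal]
  rfl

theorem Lop_eq_inv_mul_single_mul {n : ℕ} {r : Matrix (Fin n) (Fin n) ℂ}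
    (hdist : ∀ i j : Fin n, i ≠ j → r i i ≠ r j j)
    {b : Matrix (Fin n) (Fin n) ℂ} (hbu : IsUnit b.det)
    (hdiag : b * r * b⁻¹ = diagonal fun i => r i i) (ι : Fin n) :
    Lop r ι = b⁻¹ * single ι ι 1 * b := by
  have hinj : Function.Injective fun k => r k k := fun i j h => by_contra (hdist i j · h)
  have hconj : b * Lop r ι * b⁻¹ = single ι ι 1 :=
    calc b * Lop r ι * b⁻¹
        = aeval (b * r * b⁻¹) (Lagrange.basis Finset.univ (fun k => r k k) ι) := by
          rw [Lop_eq_aeval_lagrange_basis]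
          exact (aeval_units_conj (nonsingInvUnit b hbu) r _).symm
      _ = single ι ι 1 := by rw [hdiag, aeval_diagonal_lagrange_basis hinj]
  rw [← hconj, ← Matrix.mul_assoc b⁻¹, nonsing_inv_mul_cancel_right (A := b) _ hbu,
    nonsing_inv_mul_cancel_left (A := b) _ hbu]

theorem conj_diag_coordinates_are_traces_general
    (n : ℕ)
    (r : Matrix (Fin n) (Fin n) ℂ)
    (hdist : ∀ i j : Fin n, i ≠ j → r i i ≠ r j j)
    (b : Matrix (Fin n) (Fin n) ℂ) (hbu : IsUnit b.det)
    (hdiag : b * r * b⁻¹ = Matrix.diagonal fun i => r i i)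
    (s : Matrix (Fin n) (Fin n) ℂ) :
    ∀ ι : Fin n, (b * s * b⁻¹) ι ι = Matrix.trace (Lop r ι * s) := by
  intro ι
  rw [Lop_eq_inv_mul_single_mul hdist hbu hdiag ι, trace_mul_single_mul_mul]

/-- Diagonal coordinates of the conjugate of `s` are traces against the spectral
projections: if `b` is an invertible upper triangular matrix diagonalizing the regular
semisimple upper triangular matrix `r` (`b r b⁻¹ = diag(r)`), then for every lower
triangular `s` and every `ι`, `(b s b⁻¹)_{ιι} = tr(L^ι(r) · s)`. -/
theorem conj_diag_coordinates_are_traces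
    (n : ℕ) (hn : 1 ≤ n)
    (r : Matrix (Fin n) (Fin n) ℂ) (hr : IsUT r)
    (hdist : ∀ i j : Fin n, i ≠ j → r i i ≠ r j j)
    (b : Matrix (Fin n) (Fin n) ℂ) (hb : IsUT b) (hbu : IsUnit b.det)
    (hdiag : b * r * b⁻¹ = Matrix.diagonal fun i => r i i)
    (s : Matrix (Fin n) (Fin n) ℂ) (hs : IsLT s) :
    ∀ ι : Fin n, (b * s * b⁻¹) ι ι = Matrix.trace (Lop r ι * s) :=
  conj_diag_coordinates_are_traces_general n r hdist b hbu hdiag s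
end

section
/- (Proposition: on the regular semisimple locus of the zero fiber with i = j = 0, the matrix s is diagonal.) Let r be an upper triangular n×n complex matrix with pairwise distinct diagonal entries and let s be a lower triangular n×n complex matrix. If the commutator [r,s] = rs − sr vanishes in 𝔟*_n, i.e. ([r,s])_{ιγ} = 0 for all ι ≥ γ (equivalently [r,s] is strictly upper triangular), then s is a diagonal matrix. -/
namespace Matrix

open OrderDual

variable {α R : Type*} [Fintype α] [LinearOrder α] [CommRing R] {r s : Matrix α α R}

theorem mul_sub_mul_apply_of_blockTriangular (hr : r.BlockTriangular id) {ι γ : α}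
    (hbelow : ∀ k, ι < k → s k γ = 0) (hleft : ∀ k, k < γ → s ι k = 0) :
    (r * s - s * r) ι γ = (r ι ι - r γ γ) * s ι γ := by
  have hrs : (r * s) ι γ = r ι ι * s ι γ := by
    refine (mul_apply.trans (Finset.sum_eq_single ι (fun k _ hk => ?_) (by simp)))
    rcases hk.lt_or_gt with hlt | hgt
    · rw [hr hlt, zero_mul]
    · rw [hbelow k hgt, mul_zero]
  have hsr : (s * r) ι γ = s ι γ * r γ γ := by
    refine (mul_apply.trans (Finset.sum_eq_single γ (fun k _ hk => ?_) (by simp)))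
    rcases hk.lt_or_gt with hlt | hgt
    · rw [hleft k hlt, zero_mul]
    · rw [hr hgt, mul_zero]
  rw [sub_apply, hrs, hsr]
  ring

theorem isDiag_of_blockTriangular_of_mul_sub_mul_lower_eq_zero [NoZeroDivisors R]
    (hr : r.BlockTriangular id) (hdist : ∀ i j, i ≠ j → r i i ≠ r j j)
    (hs : s.BlockTriangular toDual) (hcomm : ∀ ι γ, γ ≤ ι → (r * s - s * r) ι γ = 0) :
    s.IsDiag := by
  -- Induction on `(ι, γ)` in `αᵒᵈ × α`: rows further down and columns further left come first.
  suffices h : ∀ p : αᵒᵈ × α, ofDual p.1 ≠ p.2 → s (ofDual p.1) p.2 = 0 from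
    fun i j hij => h (toDual i, j) hij
  intro p
  induction p using WellFoundedLT.induction with
  | _ p ih =>
  obtain ⟨ι, γ⟩ := p
  intro hne
  rcases hne.lt_or_gt with hlt | hgt
  · exact hs hlt
  have hbelow : ∀ k, ofDual ι < k → s k γ = 0 := fun k hk =>
    ih (toDual k, γ) (Prod.mk_lt_mk_of_lt_of_le hk le_rfl) (hgt.trans hk).ne'
  have hleft : ∀ k, k < γ → s (ofDual ι) k = 0 := fun k hk =>
    ih (ι, k) (Prod.mk_lt_mk_of_le_of_lt le_rfl hk) (hk.trans hgt).ne'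
  have hentry := hcomm _ _ hgt.le
  rw [mul_sub_mul_apply_of_blockTriangular hr hbelow hleft] at hentry
  exact (mul_eq_zero.mp hentry).resolve_left (sub_ne_zero.mpr (hdist _ _ hgt.ne'))

end Matrix

theorem rss_zero_fiber_s_is_diagonal_general
    (n : ℕ)
    (r s : Matrix (Fin n) (Fin n) ℂ) (hr : IsUT r)
    (hdist : ∀ i j : Fin n, i ≠ j → r i i ≠ r j j)
    (hs : IsLT s)
    (hcomm : ∀ ι γ : Fin n, γ ≤ ι → (r * s - s * r) ι γ = 0) :
    ∀ i j : Fin n, i ≠ j → s i j = 0 :=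
  Matrix.isDiag_of_blockTriangular_of_mul_sub_mul_lower_eq_zero
    (fun i j h => hr i j h) hdist (fun i j h => hs i j h) hcomm

/-- On the regular semisimple locus of the zero fiber with `i = j = 0`, the matrix `s`
is diagonal: if `r` is upper triangular with pairwise distinct diagonal entries, `s` is
lower triangular, and the commutator `[r,s] = rs − sr` vanishes in `𝔟*ₙ` (i.e. all its
entries on and below the diagonal are zero), then `s` is diagonal. -/
theorem rss_zero_fiber_s_is_diagonal
    (n : ℕ) (hn : 1 ≤ n)
    (r s : Matrix (Fin n) (Fin n) ℂ) (hr : IsUT r)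
    (hdist : ∀ i j : Fin n, i ≠ j → r i i ≠ r j j)
    (hs : IsLT s)
    (hcomm : ∀ ι γ : Fin n, γ ≤ ι → (r * s - s * r) ι γ = 0) :
    ∀ i j : Fin n, i ≠ j → s i j = 0 :=
  rss_zero_fiber_s_is_diagonal_general n r s hr hdist hs hcomm
end

section
/- (Proposition: closedness of B-orbits through points with i = j = 0.) Let r be an upper triangular n×n complex matrix with pairwise distinct diagonal entries and let s be a lower triangular n×n complex matrix such that π([r,s]) = 0 (i.e. [r,s] is strictly upper triangular). Then the B_n-orbit of (r,s,0,0), namely the set {(b r b^{−1}, π(b s b^{−1})) : b ∈ B_n} ⊆ 𝔟_n × 𝔟*_n, is a closed subset of 𝔟_n × 𝔟*_n in the standard (Euclidean) topology. -/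
/-! Let `P` be a polynomial with `P (r i i) = s i i`. Then `s = π (P r)`: the difference is
strictly lower triangular and its commutator with `r` has vanishing lower part, while at its
nonzero entry `(i, j)` with `i` largest, then `j` smallest, the commutator is `(r i i - r j j)`
times that entry. Conjugating by `b ∈ B` keeps `b (P r - s) b⁻¹` strictly upper triangular, so
the orbit is the graph of the continuous map `q ↦ π (P q)` over the `B`-orbit of `r`. That orbit
is the closed set of upper triangular matrices with the diagonal of `r`: for such `q`, with `Lᵢ`
the Lagrange basis polynomials at the distinct nodes `r i i`, the matrices `Lᵢ q` and `Lᵢ r` are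
the spectral projectors for the eigenvalue `r i i`, so `∑ᵢ Lᵢ q * Lᵢ r` is upper unitriangular and
intertwines `r` with `q`. -/

open Matrix Polynomial

theorem SemiconjBy.aeval {R A : Type*} [CommSemiring R] [Semiring A] [Algebra R A] {a x y : A}
    (h : SemiconjBy a x y) (p : R[X]) : SemiconjBy a (aeval x p) (aeval y p) := by
  induction p using Polynomial.induction_on with
  | C c => rw [aeval_C, aeval_C]; exact (Algebra.commutes c a).symm
  | add p q hp hq => simpa using hp.add_right hq
  | monomial k c ih => simpa [pow_succ, ← mul_assoc] using ih.mul_right h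

namespace Matrix

theorem aeval_conj {R ι : Type*} [CommRing R] [Fintype ι] [DecidableEq ι] {b A : Matrix ι ι R}
    (hb : IsUnit b.det) (p : R[X]) : aeval (b * A * b⁻¹) p = b * aeval A p * b⁻¹ := by
  have h : SemiconjBy b A (b * A * b⁻¹) := (nonsing_inv_mul_cancel_right b (b * A) hb).symm
  rw [(h.aeval p).eq, mul_nonsing_inv_cancel_right b _ hb]

section UpperTriangular

variable {R ι : Type*} [CommRing R] [Fintype ι] [LinearOrder ι]

theorem IsUpperTriangular.nonsing_inv {A : Matrix ι ι R} (hA : A.IsUpperTriangular) :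
    A⁻¹.IsUpperTriangular := by
  by_cases h : IsUnit A.det
  · have := A.invertibleOfIsUnitDet h
    exact blockTriangular_inv_of_blockTriangular hA
  · rw [nonsing_inv_apply_not_isUnit A h]
    exact blockTriangular_zero

theorem IsUpperTriangular.mul_apply_self {A B : Matrix ι ι R} (hA : A.IsUpperTriangular)
    (hB : B.IsUpperTriangular) (i : ι) : (A * B) i i = A i i * B i i := by
  rw [mul_apply]
  refine Finset.sum_eq_single i (fun k _ hk => ?_) (by simp)
  rcases hk.lt_or_gt with h | h
  · rw [hA h, zero_mul]
  · rw [hB h, mul_zero]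

theorem isUpperTriangular_aeval_s18 {A : Matrix ι ι R} (hA : A.IsUpperTriangular) (p : R[X]) :
    (aeval A p).IsUpperTriangular :=
  Algebra.adjoin_le (S := blockTriangularSubalgebra R R id) (Set.singleton_subset_iff.mpr hA)
    (aeval_mem_adjoin_singleton R A)

theorem IsUpperTriangular.aeval_apply_self {A : Matrix ι ι R} (hA : A.IsUpperTriangular)
    (p : R[X]) (i : ι) : aeval A p i i = p.eval (A i i) := by
  induction p using Polynomial.induction_on with
  | C c => simp [algebraMap_eq_diagonal]
  | add p q hp hq => simp [hp, hq]
  | monomial k c ih =>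
    rw [pow_succ, ← mul_assoc, map_mul, aeval_X,
      (isUpperTriangular_aeval_s18 hA _).mul_apply_self hA, ih]
    simp [mul_assoc]

theorem IsUpperTriangular.aeval_nodal_diag {A : Matrix ι ι R} (hA : A.IsUpperTriangular) :
    aeval A (Lagrange.nodal Finset.univ A.diag) = 0 := by
  simp only [Lagrange.nodal_eq, diag_apply, ← charpoly_of_isUpperTriangular A hA,
    aeval_self_charpoly]

end UpperTriangular

section Field

variable {K ι : Type*} [Field K] [Fintype ι] [LinearOrder ι]

theorem IsUpperTriangular.mul_aeval_lagrangeBasis {A : Matrix ι ι K} (hA : A.IsUpperTriangular)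
    (i : ι) : A * aeval A (Lagrange.basis Finset.univ A.diag i) =
      A i i • aeval A (Lagrange.basis Finset.univ A.diag i) := by
  have hi := Finset.mem_univ i
  have key : (X - C (A i i)) * Lagrange.basis Finset.univ A.diag i =
      C (Lagrange.nodalWeight Finset.univ A.diag i) * Lagrange.nodal Finset.univ A.diag := by
    rw [Lagrange.basis_eq_prod_sub_inv_mul_nodal_div hi, ← Lagrange.nodal_erase_eq_nodal_div hi,
      Lagrange.nodal_eq_mul_nodal_erase hi, diag_apply]
    ring
  have h := congrArg (Polynomial.aeval A) key
  rwa [map_mul, map_mul, hA.aeval_nodal_diag, mul_zero, map_sub, aeval_X, aeval_C, sub_mul,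
    sub_eq_zero, Algebra.algebraMap_eq_smul_one, smul_mul_assoc, one_mul] at h

theorem exists_isUpperTriangular_mul_eq_mul {q r : Matrix ι ι K} (hq : q.IsUpperTriangular)
    (hr : r.IsUpperTriangular) (hdiag : q.diag = r.diag) (hinj : Function.Injective r.diag) :
    ∃ b : Matrix ι ι K, b.IsUpperTriangular ∧ b.det = 1 ∧ q * b = b * r := by
  set L := Lagrange.basis Finset.univ r.diag
  have hq_eigen : ∀ i, q * aeval q (L i) = r i i • aeval q (L i) := fun i => by
    have h := hq.mul_aeval_lagrangeBasis i
    rwa [hdiag, show q i i = r i i from congrFun hdiag i] at h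
  have hr_eigen : ∀ i, aeval r (L i) * r = r i i • aeval r (L i) := fun i => by
    rw [← ((Commute.refl r).aeval (L i)).eq]
    exact hr.mul_aeval_lagrangeBasis i
  have hL : ∀ i j, (L i).eval (r.diag j) = if i = j then 1 else 0 := fun i j => by
    by_cases h : i = j
    · rw [if_pos h, h]
      exact Lagrange.eval_basis_self hinj.injOn (Finset.mem_univ j)
    · rw [if_neg h]
      exact Lagrange.eval_basis_of_ne h (Finset.mem_univ j)
  set b := ∑ i, aeval q (L i) * aeval r (L i)
  have hb : b.IsUpperTriangular := (blockTriangularSubalgebra K K id).sum_mem fun i _ =>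
    Subalgebra.mul_mem _ (isUpperTriangular_aeval_s18 hq _) (isUpperTriangular_aeval_s18 hr _)
  have hb_diag : ∀ j, b j j = 1 := fun j => by
    simp only [b, sum_apply, (isUpperTriangular_aeval_s18 hq _).mul_apply_self
      (isUpperTriangular_aeval_s18 hr _), hq.aeval_apply_self, hr.aeval_apply_self]
    change ∑ i, eval (q.diag j) (L i) * eval (r.diag j) (L i) = 1
    simp only [hdiag, hL, mul_ite, mul_one, mul_zero]
    simp
  refine ⟨b, hb, by simp [det_of_isUpperTriangular hb, hb_diag], ?_⟩
  simp only [b, Finset.mul_sum, Finset.sum_mul, mul_assoc, hr_eigen, ← mul_assoc q, hq_eigen,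
      smul_mul_assoc, mul_smul_comm]

end Field

section Commutator

variable {R ι : Type*} [CommRing R] [NoZeroDivisors R] [Fintype ι] [LinearOrder ι]

theorem eq_zero_of_commutator_lower_eq_zero {r t : Matrix ι ι R} (hr : r.IsUpperTriangular)
    (hinj : Function.Injective r.diag) (ht : ∀ i j, i ≤ j → t i j = 0)
    (h : ∀ i j, j ≤ i → (r * t - t * r) i j = 0) : t = 0 := by
  classical
  by_contra hne
  obtain ⟨⟨i, j⟩, hij, hmax⟩ := Finset.exists_max_image
    (Finset.univ.filter fun p : ι × ι => t p.1 p.2 ≠ 0)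
    (fun p => toLex (p.1, OrderDual.toDual p.2))
    (by simpa [Finset.filter_nonempty_iff, Matrix.ext_iff.symm] using hne)
  simp only [Finset.mem_filter, Finset.mem_univ, true_and] at hij hmax
  have hji : j < i := lt_of_not_ge fun h => hij (ht i j h)
  have below : ∀ k, i < k → t k j = 0 := fun k hk => not_not.mp fun h => by
    simpa [Prod.Lex.toLex_le_toLex, hk.not_gt, hk.ne'] using hmax (k, j) h
  have left : ∀ k, k < j → t i k = 0 := fun k hk => not_not.mp fun h =>
    hk.not_ge (by simpa [Prod.Lex.toLex_le_toLex] using hmax (i, k) h)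
  have hrt : (r * t) i j = r i i * t i j := by
    rw [mul_apply]
    refine Finset.sum_eq_single i (fun k _ hk => ?_) (by simp)
    rcases hk.lt_or_gt with h | h
    · rw [hr h, zero_mul]
    · rw [below k h, mul_zero]
  have htr : (t * r) i j = t i j * r j j := by
    rw [mul_apply]
    refine Finset.sum_eq_single j (fun k _ hk => ?_) (by simp)
    rcases hk.lt_or_gt with h | h
    · rw [left k h, zero_mul]
    · rw [hr h, mul_zero]
  have hdiff : (r i i - r j j) * t i j = 0 := by
    have hc := h i j hji.le
    rw [sub_apply, hrt, htr] at hc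
    linear_combination hc
  exact hij ((mul_eq_zero.mp hdiff).resolve_left (sub_ne_zero.mpr (hinj.ne hji.ne')))

end Commutator

theorem isClosed_setOf_isUpperTriangular {R ι : Type*} [TopologicalSpace R] [T1Space R] [Zero R]
    [LT ι] : IsClosed {M : Matrix ι ι R | M.IsUpperTriangular} := by
  simp only [IsUpperTriangular, BlockTriangular, Set.ofPred_forall]
  exact isClosed_iInter fun i => isClosed_iInter fun j => isClosed_iInter fun _ =>
    isClosed_singleton.preimage (continuous_id.matrix_elem i j)

end Matrix

section LowProj

variable {n : ℕ}

theorem isUT_iff {M : Matrix (Fin n) (Fin n) ℂ} : IsUT M ↔ M.IsUpperTriangular :=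
  ⟨fun h _ _ hij => h _ _ hij, fun h _ _ hij => h hij⟩

theorem lowProj_apply (M : Matrix (Fin n) (Fin n) ℂ) (i j : Fin n) :
    lowProj M i j = if j ≤ i then M i j else 0 := rfl

theorem lowProj_sub (M N : Matrix (Fin n) (Fin n) ℂ) :
    lowProj (M - N) = lowProj M - lowProj N := by
  ext i j
  simp only [lowProj_apply, Matrix.sub_apply]
  split_ifs <;> simp

theorem lowProj_lowProj (M : Matrix (Fin n) (Fin n) ℂ) : lowProj (lowProj M) = lowProj M := by
  ext i j
  simp only [lowProj_apply]
  split_ifs <;> rfl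

theorem lowProj_eq_zero_iff {M : Matrix (Fin n) (Fin n) ℂ} :
    lowProj M = 0 ↔ ∀ i j, j ≤ i → M i j = 0 := by
  simp [← Matrix.ext_iff, lowProj_apply]

theorem lowProj_eq_zero_iff_isUpperTriangular {M : Matrix (Fin n) (Fin n) ℂ} :
    lowProj M = 0 ↔ M.IsUpperTriangular ∧ ∀ i, M i i = 0 := by
  simp only [lowProj_eq_zero_iff, le_iff_lt_or_eq, or_imp, forall_and, forall_eq]
  rfl

theorem lowProj_mul_mul_eq_zero {a b N : Matrix (Fin n) (Fin n) ℂ} (ha : a.IsUpperTriangular)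
    (hb : b.IsUpperTriangular) (hN : lowProj N = 0) : lowProj (a * N * b) = 0 := by
  obtain ⟨hN, hN_diag⟩ := lowProj_eq_zero_iff_isUpperTriangular.mp hN
  refine lowProj_eq_zero_iff_isUpperTriangular.mpr ⟨(ha.mul hN).mul hb, fun i => ?_⟩
  rw [IsUpperTriangular.mul_apply_self (ha.mul hN) hb, ha.mul_apply_self hN, hN_diag, mul_zero,
    zero_mul]

theorem continuous_lowProj : Continuous (lowProj : Matrix (Fin n) (Fin n) ℂ → _) :=
  continuous_matrix fun i j => by
    simp only [lowProj_apply]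
    split_ifs
    · exact continuous_id.matrix_elem i j
    · exact continuous_const

def borelOrbit (r s : Matrix (Fin n) (Fin n) ℂ) :
    Set (Matrix (Fin n) (Fin n) ℂ × Matrix (Fin n) (Fin n) ℂ) :=
  {p | ∃ b : Matrix (Fin n) (Fin n) ℂ, IsUT b ∧ IsUnit b.det ∧
    p = (b * r * b⁻¹, lowProj (b * s * b⁻¹))}

theorem eq_lowProj_aeval {r s : Matrix (Fin n) (Fin n) ℂ} {P : ℂ[X]} (hr : r.IsUpperTriangular)
    (hinj : Function.Injective r.diag) (hs : IsLT s)
    (hcomm : ∀ i j, j ≤ i → (r * s - s * r) i j = 0) (hP : ∀ i, P.eval (r i i) = s i i) :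
    s = lowProj (aeval r P) := by
  set S := aeval r P
  have hrS : r * S = S * r := ((Commute.refl r).aeval P).eq
  have hS_comm : lowProj (r * lowProj S - lowProj S * r) = 0 := by
    have hN : lowProj (S - lowProj S) = 0 := by rw [lowProj_sub, lowProj_lowProj, sub_self]
    have hswap : r * lowProj S - lowProj S * r =
        1 * (S - lowProj S) * r - r * (S - lowProj S) * 1 := by
      simp only [Matrix.one_mul, Matrix.mul_one, Matrix.mul_sub, Matrix.sub_mul, hrS]
      abel
    rw [hswap, lowProj_sub, lowProj_mul_mul_eq_zero blockTriangular_one hr hN,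
      lowProj_mul_mul_eq_zero hr blockTriangular_one hN, sub_zero]
  rw [← sub_eq_zero]
  refine eq_zero_of_commutator_lower_eq_zero hr hinj (fun i j hij => ?_) (fun i j hji => ?_)
  · rcases hij.lt_or_eq with hlt | rfl
    · simp [hs i j hlt, lowProj_apply, hlt.not_ge]
    · simp [lowProj_apply, S, hr.aeval_apply_self, hP]
  · have h := lowProj_eq_zero_iff.mp hS_comm i j hji
    have hc := hcomm i j hji
    simp only [Matrix.mul_sub, Matrix.sub_mul, Matrix.sub_apply] at h hc ⊢
    linear_combination hc - h

theorem lowProj_conj_eq_lowProj_aeval {r s b : Matrix (Fin n) (Fin n) ℂ} {P : ℂ[X]}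
    (hb : b.IsUpperTriangular) (hbu : IsUnit b.det) (hsP : s = lowProj (aeval r P)) :
    lowProj (b * s * b⁻¹) = lowProj (aeval (b * r * b⁻¹) P) := by
  rw [aeval_conj hbu, eq_comm, ← sub_eq_zero, ← lowProj_sub, ← Matrix.sub_mul, ← Matrix.mul_sub]
  exact lowProj_mul_mul_eq_zero hb hb.nonsing_inv
    (by rw [lowProj_sub, hsP, lowProj_lowProj, sub_self])

theorem borelOrbit_eq {r s : Matrix (Fin n) (Fin n) ℂ} {P : ℂ[X]} (hr : r.IsUpperTriangular)
    (hinj : Function.Injective r.diag) (hsP : s = lowProj (aeval r P)) :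
    borelOrbit r s =
      {p | p.1.IsUpperTriangular ∧ p.1.diag = r.diag ∧ p.2 = lowProj (aeval p.1 P)} := by
  ext ⟨q, p⟩
  constructor
  · rintro ⟨b, hb, hbu, hqp⟩
    rw [isUT_iff] at hb
    obtain ⟨rfl, rfl⟩ := Prod.ext_iff.mp hqp
    refine ⟨(hb.mul hr).mul hb.nonsing_inv, funext fun i => ?_,
      lowProj_conj_eq_lowProj_aeval hb hbu hsP⟩
    have hbb : b i i * b⁻¹ i i = 1 := by
      rw [← hb.mul_apply_self hb.nonsing_inv, mul_nonsing_inv b hbu, one_apply_eq]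
    simp only [diag_apply]
    rw [IsUpperTriangular.mul_apply_self (hb.mul hr) hb.nonsing_inv, hb.mul_apply_self hr]
    linear_combination r i i * hbb
  · rintro ⟨hq, hdiag, hp⟩
    dsimp only at hq hdiag hp
    subst hp
    obtain ⟨b, hb, hdet, hqb⟩ := exists_isUpperTriangular_mul_eq_mul hq hr hdiag hinj
    have hbu : IsUnit b.det := hdet ▸ isUnit_one
    have hbr : b * r * b⁻¹ = q := by rw [← hqb, mul_nonsing_inv_cancel_right b q hbu]
    refine ⟨b, isUT_iff.mpr hb, hbu, ?_⟩
    rw [lowProj_conj_eq_lowProj_aeval hb hbu hsP, hbr]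

end LowProj

theorem Borel_orbit_closed_when_i_j_zero_general
    (n : ℕ)
    (r s : Matrix (Fin n) (Fin n) ℂ) (hr : IsUT r)
    (hdist : ∀ i j : Fin n, i ≠ j → r i i ≠ r j j)
    (hs : IsLT s)
    (hcomm : ∀ ι γ : Fin n, γ ≤ ι → (r * s - s * r) ι γ = 0) :
    IsClosed {p : Matrix (Fin n) (Fin n) ℂ × Matrix (Fin n) (Fin n) ℂ |
      ∃ b : Matrix (Fin n) (Fin n) ℂ, IsUT b ∧ IsUnit b.det ∧
        p = (b * r * b⁻¹, lowProj (b * s * b⁻¹))} := by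
  rw [isUT_iff] at hr
  have hinj : Function.Injective r.diag := fun i j h => not_imp_not.mp (hdist i j) h
  obtain ⟨P, hP⟩ : ∃ P : ℂ[X], ∀ i, P.eval (r i i) = s i i :=
    (exists_eval_eq_iff _ _).mpr fun i j h => by rw [hinj h]
  change IsClosed (borelOrbit r s)
  rw [borelOrbit_eq hr hinj (eq_lowProj_aeval hr hinj hs hcomm hP)]
  exact (isClosed_setOf_isUpperTriangular.preimage continuous_fst).inter
    ((isClosed_eq continuous_fst.matrix_diag continuous_const).inter
      (isClosed_eq continuous_snd
        (continuous_lowProj.comp (P.continuous_aeval.comp continuous_fst))))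

/-- Closedness of `B`-orbits through points with `i = j = 0`: if `r` is upper
triangular with pairwise distinct diagonal entries, `s` is lower triangular, and
`π([r,s]) = 0` (i.e. `[r,s]` is strictly upper triangular), then the `Bₙ`-orbit
`{(b r b⁻¹, π(b s b⁻¹)) : b ∈ Bₙ} ⊆ 𝔟ₙ × 𝔟*ₙ` is closed in the standard (Euclidean)
topology. -/
theorem Borel_orbit_closed_when_i_j_zero
    (n : ℕ) (hn : 1 ≤ n)
    (r s : Matrix (Fin n) (Fin n) ℂ) (hr : IsUT r)
    (hdist : ∀ i j : Fin n, i ≠ j → r i i ≠ r j j)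
    (hs : IsLT s)
    (hcomm : ∀ ι γ : Fin n, γ ≤ ι → (r * s - s * r) ι γ = 0) :
    IsClosed {p : Matrix (Fin n) (Fin n) ℂ × Matrix (Fin n) (Fin n) ℂ |
      ∃ b : Matrix (Fin n) (Fin n) ℂ, IsUT b ∧ IsUnit b.det ∧
        p = (b * r * b⁻¹, lowProj (b * s * b⁻¹))} :=
  Borel_orbit_closed_when_i_j_zero_general n r s hr hdist hs hcomm
end
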